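/- arXiv:1908.09553 — 2 statements merged into one kernel-verified Lean document; each statement's English description precedes it below -/
import Mathlib

section
/- Let S be a ring with an approximate unit. If P is a non-degenerate left S-module which is projective in the category of non-degenerate left S-modules, then P is flat, in the sense that the functor − ⊗_S P from non-degenerate right S-modules to abelian groups is exact. -/
/-!
Write `P` as a retract of `ι →₀ S` through `σ` and `π`. Then `x ⊗ p ↦ (x · σ(p)ᵢ)ᵢ` is a map
`N ⊗_S P → ι →₀ N`, natural in `N`, and it has a left inverse sending `x` placed at `i` to
`x ⊗ π (eⱼ placed at i)`, for any `j` with `x · eⱼ = x`; this does not depend on `j` because the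
approximate unit is directed. So `N ⊗_S P` embeds naturally into `ι →₀ N`, on which `f` acts
injectively.
-/

open scoped TensorProduct

/-- The additive subgroup of `N ⊗_ℤ P` generated by the balancing relations
`(x · s) ⊗ p - x ⊗ (s • p)`, where the right `S`-module structure on `N` is given by `ρ`;
the quotient is the balanced tensor product `N ⊗_S P`. -/
noncomputable def balancedRelR (S : Type*) [NonUnitalRing S]
    (N : Type) [AddCommGroup N] (ρ : N → S → N)
    (P : Type) [AddCommGroup P] [SMul S P] : AddSubgroup (TensorProduct ℤ N P) :=
  AddSubgroup.closure {a | ∃ (x : N) (s : S) (p : P), a = (ρ x s) ⊗ₜ[ℤ] p - x ⊗ₜ[ℤ] (s • p)}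

section

variable {S : Type*} [NonUnitalRing S]

structure IsRightAction {N : Type*} [AddCommGroup N] (ρ : N → S → N) : Prop where
  add_left : ∀ (x y : N) (s : S), ρ (x + y) s = ρ x s + ρ y s
  add_right : ∀ (x : N) (s t : S), ρ x (s + t) = ρ x s + ρ x t
  mul_right : ∀ (x : N) (s t : S), ρ x (s * t) = ρ (ρ x s) t

namespace IsRightAction

variable {N : Type*} [AddCommGroup N] {ρ : N → S → N}

def toAddMonoidHom (hρ : IsRightAction ρ) : N →+ S →+ N :=
  AddMonoidHom.mk' (fun x => AddMonoidHom.mk' (ρ x) (hρ.add_right x))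
    fun x y => by ext s; exact hρ.add_left x y s

@[simp]
lemma toAddMonoidHom_apply (hρ : IsRightAction ρ) (x : N) (s : S) :
    hρ.toAddMonoidHom x s = ρ x s :=
  rfl

end IsRightAction

abbrev BalancedTensor (S : Type*) [NonUnitalRing S] (N : Type) [AddCommGroup N]
    (ρ : N → S → N) (P : Type) [AddCommGroup P] [SMul S P] : Type :=
  N ⊗[ℤ] P ⧸ balancedRelR S N ρ P

namespace BalancedTensor

variable {N : Type} [AddCommGroup N] {ρ : N → S → N} {P : Type} [AddCommGroup P] [SMul S P]
  {Q : Type*} [AddCommGroup Q]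

lemma mk_act_tmul (x : N) (s : S) (p : P) :
    (QuotientAddGroup.mk (ρ x s ⊗ₜ[ℤ] p) : BalancedTensor S N ρ P) =
      QuotientAddGroup.mk (x ⊗ₜ[ℤ] (s • p)) :=
  QuotientAddGroup.eq_iff_sub_mem.2 (AddSubgroup.subset_closure ⟨x, s, p, rfl⟩)

lemma hom_ext {g h : BalancedTensor S N ρ P →+ Q}
    (H : ∀ x p, g (QuotientAddGroup.mk (x ⊗ₜ p)) = h (QuotientAddGroup.mk (x ⊗ₜ p))) :
    g = h :=
  QuotientAddGroup.addMonoidHom_ext _ <| AddMonoidHom.toIntLinearMap_injective <|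
    TensorProduct.ext' H

noncomputable def lift (g : N →+ P →+ Q) (hg : ∀ x s p, g (ρ x s) p = g x (s • p)) :
    BalancedTensor S N ρ P →+ Q :=
  QuotientAddGroup.lift _ (TensorProduct.liftAddHom g fun r x p => by simp) <| by
    refine (AddSubgroup.closure_le _).2 ?_
    rintro _ ⟨x, s, p, rfl⟩
    simp [hg]

section Coefficients

variable {ι : Type} {σ : P →+ (ι →₀ S)} (hσ : ∀ (s : S) (p : P), σ (s • p) = s • σ p)
  (hρ : IsRightAction ρ)
include hσ hρ

noncomputable def toFinsupp : BalancedTensor S N ρ P →+ (ι →₀ N) :=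
  lift (AddMonoidHom.mk' (fun x => (Finsupp.mapRange.addMonoidHom (hρ.toAddMonoidHom x)).comp σ)
      fun x y => by ext p i; simp)
    fun x s p => by ext i; simp [hσ, hρ.mul_right]

lemma toFinsupp_mk_tmul (x : N) (p : P) :
    toFinsupp hσ hρ (QuotientAddGroup.mk (x ⊗ₜ p)) =
      Finsupp.mapRange.addMonoidHom (hρ.toAddMonoidHom x) (σ p) :=
  rfl

lemma toFinsupp_comp_map {N' : Type} [AddCommGroup N'] {ρ' : N' → S → N'}
    (hρ' : IsRightAction ρ') {f : N →+ N'} (hfρ : ∀ x s, f (ρ x s) = ρ' (f x) s)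
    {Φ : BalancedTensor S N ρ P →+ BalancedTensor S N' ρ' P}
    (hΦ : ∀ x p, Φ (QuotientAddGroup.mk (x ⊗ₜ p)) = QuotientAddGroup.mk (f x ⊗ₜ p)) :
    (toFinsupp hσ hρ').comp Φ = (Finsupp.mapRange.addMonoidHom f).comp (toFinsupp hσ hρ) := by
  refine hom_ext fun x p => ?_
  ext i
  simp [hΦ, toFinsupp_mk_tmul, hfρ]

end Coefficients

section Retraction

variable {ι : Type} {π : (ι →₀ S) →+ P} {I : Type*} [Preorder I] {e : I → S}
  (hρ : IsRightAction ρ) (hπ : ∀ (s : S) (v : ι →₀ S), π (s • v) = s • π v)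
  (he_mono : ∀ i j, i ≤ j → e i * e j = e i) (hN : ∀ x : N, ∃ i, ρ x (e i) = x)

include hπ in
lemma mk_act_tmul_map (x : N) (s : S) (v : ι →₀ S) :
    (QuotientAddGroup.mk (ρ x s ⊗ₜ[ℤ] π v) : BalancedTensor S N ρ P) =
      QuotientAddGroup.mk (x ⊗ₜ[ℤ] π (s • v)) := by
  rw [mk_act_tmul, hπ]

include hπ in
lemma mk_tmul_map_single_mul {x : N} {t : S} (hx : ρ x t = x) (i : ι) (s : S) :
    (QuotientAddGroup.mk (x ⊗ₜ[ℤ] π (Finsupp.single i (t * s))) : BalancedTensor S N ρ P) =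
      QuotientAddGroup.mk (x ⊗ₜ[ℤ] π (Finsupp.single i s)) := by
  conv_rhs => rw [← hx]
  rw [mk_act_tmul_map hπ, Finsupp.smul_single, smul_eq_mul]

include hρ he_mono in
lemma act_unit_of_le {x : N} {j l : I} (hx : ρ x (e j) = x) (hjl : j ≤ l) : ρ x (e l) = x := by
  rw [← hx, ← hρ.mul_right, he_mono j l hjl]

variable (π) in
noncomputable def unitTensor (i : ι) (x : N) : BalancedTensor S N ρ P :=
  QuotientAddGroup.mk (x ⊗ₜ[ℤ] π (Finsupp.single i (e (hN x).choose)))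

variable [IsDirected I (· ≤ ·)]

include hπ he_mono in
lemma mk_tmul_map_single_unit_eq {x : N} {j k : I} (hj : ρ x (e j) = x) (hk : ρ x (e k) = x)
    (i : ι) :
    (QuotientAddGroup.mk (x ⊗ₜ[ℤ] π (Finsupp.single i (e j))) : BalancedTensor S N ρ P) =
      QuotientAddGroup.mk (x ⊗ₜ[ℤ] π (Finsupp.single i (e k))) := by
  obtain ⟨l, hjl, hkl⟩ := directed_of (· ≤ ·) j k
  rw [← he_mono j l hjl, ← he_mono k l hkl, mk_tmul_map_single_mul hπ hj,
    mk_tmul_map_single_mul hπ hk]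

include hρ he_mono hN in
lemma exists_act_unit_pair (x y : N) : ∃ l, ρ x (e l) = x ∧ ρ y (e l) = y := by
  obtain ⟨j, hj⟩ := hN x
  obtain ⟨k, hk⟩ := hN y
  obtain ⟨l, hjl, hkl⟩ := directed_of (· ≤ ·) j k
  exact ⟨l, act_unit_of_le hρ he_mono hj hjl, act_unit_of_le hρ he_mono hk hkl⟩

include hπ he_mono in
lemma unitTensor_eq {x : N} {j : I} (hj : ρ x (e j) = x) (i : ι) :
    unitTensor π hN i x = QuotientAddGroup.mk (x ⊗ₜ[ℤ] π (Finsupp.single i (e j))) :=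
  mk_tmul_map_single_unit_eq hπ he_mono (hN x).choose_spec hj i

noncomputable def fromFinsupp : (ι →₀ N) →+ BalancedTensor S N ρ P :=
  Finsupp.liftAddHom fun i => AddMonoidHom.mk' (unitTensor π hN i) fun x y => by
    obtain ⟨l, hx, hy⟩ := exists_act_unit_pair hρ he_mono hN x y
    rw [unitTensor_eq hπ he_mono hN (j := l) (by rw [hρ.add_left, hx, hy]),
      unitTensor_eq hπ he_mono hN hx, unitTensor_eq hπ he_mono hN hy,
      TensorProduct.add_tmul, QuotientAddGroup.mk_add]

lemma fromFinsupp_single_act {l : I} {s : S} (hs : s * e l = s) (i : ι) (x : N) :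
    fromFinsupp hρ hπ he_mono hN (Finsupp.single i (ρ x s)) =
      QuotientAddGroup.mk (x ⊗ₜ[ℤ] π (Finsupp.single i s)) := by
  have hunit : ρ (ρ x s) (e l) = ρ x s := by rw [← hρ.mul_right, hs]
  rw [fromFinsupp, Finsupp.liftAddHom_apply_single, AddMonoidHom.mk'_apply,
    unitTensor_eq hπ he_mono hN hunit, mk_act_tmul_map hπ, Finsupp.smul_single, smul_eq_mul, hs]

variable (he_unit : ∀ s : S, ∃ l, s * e l = s)
include he_unit

lemma fromFinsupp_mapRange_act (x : N) (v : ι →₀ S) :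
    fromFinsupp hρ hπ he_mono hN (Finsupp.mapRange.addMonoidHom (hρ.toAddMonoidHom x) v) =
      QuotientAddGroup.mk (x ⊗ₜ[ℤ] π v) := by
  induction v using Finsupp.induction_linear with
  | zero => simp
  | add v w hv hw => simp only [map_add, hv, hw, TensorProduct.tmul_add, QuotientAddGroup.mk_add]
  | single i s =>
    obtain ⟨l, hl⟩ := he_unit s
    simpa using fromFinsupp_single_act hρ hπ he_mono hN hl i x

lemma fromFinsupp_toFinsupp {σ : P →+ (ι →₀ S)} (hσ : ∀ (s : S) (p : P), σ (s • p) = s • σ p)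
    (hπσ : ∀ p, π (σ p) = p) :
    Function.LeftInverse (fromFinsupp hρ hπ he_mono hN) (toFinsupp hσ hρ) := by
  suffices (fromFinsupp hρ hπ he_mono hN).comp (toFinsupp hσ hρ) = AddMonoidHom.id _ from
    DFunLike.congr_fun this
  refine hom_ext fun x p => ?_
  simp only [AddMonoidHom.comp_apply, toFinsupp_mk_tmul, AddMonoidHom.id_apply,
    fromFinsupp_mapRange_act hρ hπ he_mono hN he_unit, hπσ]

end Retraction

end BalancedTensor

end

theorem stmt1_general (S : Type*) [NonUnitalRing S]
    {I : Type*} [Preorder I] [IsDirected I (· ≤ ·)] (e : I → S)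
    (he_unit : ∀ s : S, ∃ i, e i * s = s ∧ s * e i = s)
    (he_mono : ∀ i j : I, i ≤ j → e j * e i = e i ∧ e i * e j = e i)
    -- `P` is a non-degenerate left `S`-module:
    (P : Type) [AddCommGroup P] [SMul S P]
    -- `P` is projective: an `S`-linear direct summand of a direct sum `⊕_ι S`:
    (hproj : ∃ (ι : Type) (σ : P →+ (ι →₀ S)) (π : (ι →₀ S) →+ P),
      (∀ (s : S) (p : P), σ (s • p) = s • σ p) ∧
      (∀ (s : S) (v : ι →₀ S), π (s • v) = s • π v) ∧
      (∀ p : P, π (σ p) = p))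
    -- `N` and `N'` are non-degenerate right `S`-modules, with actions `ρ`, `ρ'`:
    (N N' : Type) [AddCommGroup N] [AddCommGroup N']
    (ρ : N → S → N) (ρ' : N' → S → N')
    (hρ_add : ∀ (x y : N) (s : S), ρ (x + y) s = ρ x s + ρ y s)
    (hρ_add' : ∀ (x : N) (s t : S), ρ x (s + t) = ρ x s + ρ x t)
    (hρ_mul : ∀ (x : N) (s t : S), ρ x (s * t) = ρ (ρ x s) t)
    (hNnondeg : ∀ x : N, ∃ i, ρ x (e i) = x)
    (hρ'_add : ∀ (x y : N') (s : S), ρ' (x + y) s = ρ' x s + ρ' y s)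
    (hρ'_add' : ∀ (x : N') (s t : S), ρ' x (s + t) = ρ' x s + ρ' x t)
    (hρ'_mul : ∀ (x : N') (s t : S), ρ' x (s * t) = ρ' (ρ' x s) t)
    -- `f : N → N'` is an injective map of right `S`-modules:
    (f : N →+ N') (hf : Function.Injective f)
    (hfρ : ∀ (x : N) (s : S), f (ρ x s) = ρ' (f x) s)
    -- `Φ` is the induced map `N ⊗_S P → N' ⊗_S P`:
    (Φ : (TensorProduct ℤ N P ⧸ balancedRelR S N ρ P) →+
      (TensorProduct ℤ N' P ⧸ balancedRelR S N' ρ' P))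
    (hΦ : ∀ (x : N) (p : P), Φ (QuotientAddGroup.mk (x ⊗ₜ[ℤ] p)) =
      QuotientAddGroup.mk ((f x) ⊗ₜ[ℤ] p)) :
    Function.Injective Φ := by
  obtain ⟨ι, σ, π, hσ, hπ, hπσ⟩ := hproj
  have hρN : IsRightAction ρ := ⟨hρ_add, hρ_add', hρ_mul⟩
  have hρN' : IsRightAction ρ' := ⟨hρ'_add, hρ'_add', hρ'_mul⟩
  have he_mono' : ∀ i j, i ≤ j → e i * e j = e i := fun i j hij => (he_mono i j hij).2
  have he_unit' : ∀ s, ∃ l, s * e l = s := fun s => (he_unit s).imp fun _ h => h.2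
  have hleft := BalancedTensor.fromFinsupp_toFinsupp hρN hπ he_mono' hNnondeg he_unit' hσ hπσ
  have hnat := BalancedTensor.toFinsupp_comp_map hσ hρN hρN' hfρ hΦ
  refine Function.Injective.of_comp (f := BalancedTensor.toFinsupp hσ hρN') ?_
  rw [← AddMonoidHom.coe_comp, hnat, AddMonoidHom.coe_comp]
  exact (Finsupp.mapRange_injective f f.map_zero hf).comp hleft.injective

/-- Let `S` be a (possibly non-unital) ring with an approximate unit, and let `P` be a
non-degenerate left `S`-module which is projective in the category of non-degenerate left
`S`-modules (i.e. an `S`-linear direct summand of a direct sum of copies of the left regular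
representation `S`).  Then `P` is flat: the functor `- ⊗_S P` from non-degenerate right
`S`-modules to abelian groups is exact, i.e. it preserves injectivity (being automatically
right exact).  Concretely: for every injective map `f : N → N'` of non-degenerate right
`S`-modules, the induced map `N ⊗_S P → N' ⊗_S P` is injective. -/
theorem stmt1 (S : Type*) [NonUnitalRing S]
    {I : Type*} [Preorder I] [IsDirected I (· ≤ ·)] (e : I → S)
    (he_idem : ∀ i, e i * e i = e i)
    (he_unit : ∀ s : S, ∃ i, e i * s = s ∧ s * e i = s)
    (he_mono : ∀ i j : I, i ≤ j → e j * e i = e i ∧ e i * e j = e i)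
    -- `P` is a non-degenerate left `S`-module:
    (P : Type) [AddCommGroup P] [SMul S P]
    (hsmul_add : ∀ (s : S) (p q : P), s • (p + q) = s • p + s • q)
    (hadd_smul : ∀ (s t : S) (p : P), (s + t) • p = s • p + t • p)
    (hmul_smul : ∀ (s t : S) (p : P), (s * t) • p = s • (t • p))
    (hPnondeg : ∀ p : P, ∃ i, e i • p = p)
    -- `P` is projective: an `S`-linear direct summand of a direct sum `⊕_ι S`:
    (hproj : ∃ (ι : Type) (σ : P →+ (ι →₀ S)) (π : (ι →₀ S) →+ P),
      (∀ (s : S) (p : P), σ (s • p) = s • σ p) ∧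
      (∀ (s : S) (v : ι →₀ S), π (s • v) = s • π v) ∧
      (∀ p : P, π (σ p) = p))
    -- `N` and `N'` are non-degenerate right `S`-modules, with actions `ρ`, `ρ'`:
    (N N' : Type) [AddCommGroup N] [AddCommGroup N']
    (ρ : N → S → N) (ρ' : N' → S → N')
    (hρ_add : ∀ (x y : N) (s : S), ρ (x + y) s = ρ x s + ρ y s)
    (hρ_add' : ∀ (x : N) (s t : S), ρ x (s + t) = ρ x s + ρ x t)
    (hρ_mul : ∀ (x : N) (s t : S), ρ x (s * t) = ρ (ρ x s) t)
    (hNnondeg : ∀ x : N, ∃ i, ρ x (e i) = x)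
    (hρ'_add : ∀ (x y : N') (s : S), ρ' (x + y) s = ρ' x s + ρ' y s)
    (hρ'_add' : ∀ (x : N') (s t : S), ρ' x (s + t) = ρ' x s + ρ' x t)
    (hρ'_mul : ∀ (x : N') (s t : S), ρ' x (s * t) = ρ' (ρ' x s) t)
    (hN'nondeg : ∀ x : N', ∃ i, ρ' x (e i) = x)
    -- `f : N → N'` is an injective map of right `S`-modules:
    (f : N →+ N') (hf : Function.Injective f)
    (hfρ : ∀ (x : N) (s : S), f (ρ x s) = ρ' (f x) s)
    -- `Φ` is the induced map `N ⊗_S P → N' ⊗_S P`: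
    (Φ : (TensorProduct ℤ N P ⧸ balancedRelR S N ρ P) →+
      (TensorProduct ℤ N' P ⧸ balancedRelR S N' ρ' P))
    (hΦ : ∀ (x : N) (p : P), Φ (QuotientAddGroup.mk (x ⊗ₜ[ℤ] p)) =
      QuotientAddGroup.mk ((f x) ⊗ₜ[ℤ] p)) :
    Function.Injective Φ :=
  stmt1_general S e he_unit he_mono P hproj N N' ρ ρ' hρ_add hρ_add' hρ_mul hNnondeg hρ'_add
    hρ'_add' hρ'_mul f hf hfρ Φ hΦ
end

section
/- For each k ∈ Z let v_k = e_k + 2e_{k+1} + e_{k+2} ∈ ⊕_{n∈Z} Q (where e_n is the standard basis). Then e_0 is not in the Q-linear span of {v_k : k ∈ Z}. -/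
/-- For `k ∈ ℤ` let `v k = e k + 2 e (k+1) + e (k+2)` in `⊕_{n ∈ ℤ} ℚ`.
Then `e 0` is not in the `ℚ`-linear span of the `v k`. -/
theorem stmt12 :
    Finsupp.single (0 : ℤ) (1 : ℚ) ∉ Submodule.span ℚ
      (Set.range fun k : ℤ =>
        Finsupp.single k (1 : ℚ) + 2 • Finsupp.single (k + 1) (1 : ℚ) +
          Finsupp.single (k + 2) (1 : ℚ)) := by
  intro h
  set φ : (ℤ →₀ ℚ) →ₗ[ℚ] ℚ := Finsupp.linearCombination ℚ (fun n : ℤ => (-1 : ℚ) ^ n) with hφ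
  have hker : Submodule.span ℚ
      (Set.range fun k : ℤ =>
        Finsupp.single k (1 : ℚ) + 2 • Finsupp.single (k + 1) (1 : ℚ) +
          Finsupp.single (k + 2) (1 : ℚ)) ≤ LinearMap.ker φ := by
    rw [Submodule.span_le]
    rintro _ ⟨k, rfl⟩
    simp only [LinearMap.mem_ker, SetLike.mem_coe, map_add, map_nsmul, map_smul, hφ, nsmul_eq_mul, Nat.cast_ofNat,
      Finsupp.linearCombination_single, one_smul, smul_eq_mul]
    have h1 : (-1 : ℚ) ^ (k + 1) = (-1 : ℚ) ^ k * (-1) := by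
      rw [zpow_add₀ (by norm_num : (-1 : ℚ) ≠ 0)]; simp
    have h2 : (-1 : ℚ) ^ (k + 2) = (-1 : ℚ) ^ k := by
      rw [zpow_add₀ (by norm_num : (-1 : ℚ) ≠ 0)]; norm_num
    rw [h1, h2]; ring
  have := hker h
  simp only [LinearMap.mem_ker, hφ, Finsupp.linearCombination_single, one_smul] at this
  norm_num at this
end
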